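/- arXiv:1810.00846 — 3 statements merged into one kernel-verified Lean document; each statement's English description precedes it below -/
import Mathlib

section
/- (Theorem 1, risk decomposition) Let σ(x) = p(s=+1|x) and let h: ℝ^d → [0,1], η ∈ [0,1] satisfy h(x) > η ⇒ σ(x) > 0. Then the partial risk R̄⁻_{s=-1}(g) := (1-π-ρ)·E_{x∼p(x|s=-1)}[ℓ(-g(x))] equals E_{x∼p}[1_{h(x)≤η}·ℓ(-g(x))·(1-σ(x))] + π·E_{x∼p_P}[1_{h(x)>η}·ℓ(-g(x))·(1-σ(x))/σ(x)] + ρ·E_{x∼p_bN}[1_{h(x)>η}·ℓ(-g(x))·(1-σ(x))/σ(x)]. -/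
open MeasureTheory

/-- Theorem 1 (risk decomposition). With σ(x) = p(s=+1|x), so that the density of
(x, s=-1) is (1-σ)p and σ·p = π p_P + ρ p_bN, for any h : α → [0,1] and η with
h(x) > η ⇒ σ(x) > 0, the partial risk R̄⁻_{s=-1}(g) = ∫ ℓ(-g x)(1-σ x) p x dμ
decomposes into a U-part, a P-part and a bN-part. -/
theorem stmt_3 {α : Type*} [MeasurableSpace α] (μ : Measure α)
    (p pP pbN σ h : α → ℝ) (π ρ η : ℝ) (ℓ : ℝ → ℝ) (g : α → ℝ)
    (hη : η ∈ Set.Icc (0 : ℝ) 1)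
    (hrange : ∀ x, h x ∈ Set.Icc (0 : ℝ) 1)
    (hσrange : ∀ x, σ x ∈ Set.Icc (0 : ℝ) 1)
    (hcond : ∀ x, h x > η → σ x > 0)
    (hmix : ∀ x, σ x * p x = π * pP x + ρ * pbN x)
    (hint : Integrable (fun x => ℓ (-g x) * (1 - σ x) * p x) μ)
    (hintU : Integrable
      (fun x => (if h x ≤ η then ℓ (-g x) * (1 - σ x) else 0) * p x) μ)
    (hintP : Integrable
      (fun x => (if h x > η then ℓ (-g x) * ((1 - σ x) / σ x) else 0) * pP x) μ)
    (hintbN : Integrable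
      (fun x => (if h x > η then ℓ (-g x) * ((1 - σ x) / σ x) else 0) * pbN x) μ) :
    ∫ x, ℓ (-g x) * (1 - σ x) * p x ∂μ
      = (∫ x, (if h x ≤ η then ℓ (-g x) * (1 - σ x) else 0) * p x ∂μ)
        + π * (∫ x, (if h x > η then ℓ (-g x) * ((1 - σ x) / σ x) else 0) * pP x ∂μ)
        + ρ * ∫ x, (if h x > η then ℓ (-g x) * ((1 - σ x) / σ x) else 0) * pbN x ∂μ := by
  have key : ∀ x, ℓ (-g x) * (1 - σ x) * p x
      = (if h x ≤ η then ℓ (-g x) * (1 - σ x) else 0) * p x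
        + π * ((if h x > η then ℓ (-g x) * ((1 - σ x) / σ x) else 0) * pP x)
        + ρ * ((if h x > η then ℓ (-g x) * ((1 - σ x) / σ x) else 0) * pbN x) := by
    intro x
    by_cases hle : h x ≤ η
    · simp [hle, not_lt.mpr hle]
    · have hgt : h x > η := lt_of_not_ge hle
      have hσ := hcond x hgt
      simp only [hle, hgt, if_true, if_false, if_pos hgt]
      have : π * (ℓ (-g x) * ((1 - σ x) / σ x) * pP x)
          + ρ * (ℓ (-g x) * ((1 - σ x) / σ x) * pbN x)
          = ℓ (-g x) * ((1 - σ x) / σ x) * (π * pP x + ρ * pbN x) := by ring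
      rw [zero_mul, zero_add, this, ← hmix x]
      field_simp
  calc ∫ x, ℓ (-g x) * (1 - σ x) * p x ∂μ
      = ∫ x, ((if h x ≤ η then ℓ (-g x) * (1 - σ x) else 0) * p x
        + π * ((if h x > η then ℓ (-g x) * ((1 - σ x) / σ x) else 0) * pP x)
        + ρ * ((if h x > η then ℓ (-g x) * ((1 - σ x) / σ x) else 0) * pbN x)) ∂μ := by
        exact integral_congr_ae (Filter.Eventually.of_forall key)
    _ = _ := by
        have h1 : Integrable (fun x => (if h x ≤ η then ℓ (-g x) * (1 - σ x) else 0) * p x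
            + π * ((if h x > η then ℓ (-g x) * ((1 - σ x) / σ x) else 0) * pP x)) μ :=
          hintU.add (hintP.const_mul π)
        have h2 : Integrable (fun x => π * ((if h x > η then ℓ (-g x) * ((1 - σ x) / σ x) else 0) * pP x)) μ :=
          hintP.const_mul π
        have h3 : Integrable (fun x => ρ * ((if h x > η then ℓ (-g x) * ((1 - σ x) / σ x) else 0) * pbN x)) μ :=
          hintbN.const_mul ρ
        rw [integral_add h1 h3, integral_add hintU h2, MeasureTheory.integral_const_mul, MeasureTheory.integral_const_mul]
end

section
/- (Lemma 2) Let σ̂: ℝ^d → [0,1], η ∈ (0,1], ζ = P_{x∼p}(σ̂(x) ≤ η), and ε = E_{x∼p}[(σ̂(x)-σ(x))²]. Define R̄⁻_{s=-1,η,σ̂}(g) = E_{x∼p}[1_{σ̂(x)≤η}ℓ(-g(x))(1-σ̂(x))] + ∫ 1_{σ̂(x)>η} ℓ(-g(x)) ((1-σ̂(x))/σ̂(x)) p(x,s=+1) dx, and R̄⁻_{s=-1}(g) = ∫ ℓ(-g(x)) p(x,s=-1) dx. If 0 ≤ ℓ(-g(x)) ≤ C_ℓ for all x, then |R̄⁻_{s=-1,η,σ̂}(g)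 - R̄⁻_{s=-1}(g)| ≤ C_ℓ·√(ζε) + (C_ℓ/η)·√((1-ζ)ε). -/
open MeasureTheory

/-- Cauchy–Schwarz for `√f · √h`. -/
theorem cs_sqrt {α : Type*} [MeasurableSpace α] (μ : Measure α) (f h : α → ℝ)
    (hf0 : ∀ x, 0 ≤ f x) (hh0 : ∀ x, 0 ≤ h x)
    (hf : Integrable f μ) (hh : Integrable h μ) :
    Integrable (fun x => Real.sqrt (f x) * Real.sqrt (h x)) μ ∧
      ∫ x, Real.sqrt (f x) * Real.sqrt (h x) ∂μ
        ≤ Real.sqrt ((∫ x, f x ∂μ) * ∫ x, h x ∂μ) := by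
  have hfm : AEStronglyMeasurable (fun x => Real.sqrt (f x)) μ :=
    Real.continuous_sqrt.comp_aestronglyMeasurable hf.1
  have hhm : AEStronglyMeasurable (fun x => Real.sqrt (h x)) μ :=
    Real.continuous_sqrt.comp_aestronglyMeasurable hh.1
  have hf2 : MemLp (fun x => Real.sqrt (f x)) 2 μ := by
    rw [memLp_two_iff_integrable_sq hfm]
    exact hf.congr (ae_of_all μ fun x => (Real.sq_sqrt (hf0 x)).symm)
  have hh2 : MemLp (fun x => Real.sqrt (h x)) 2 μ := by
    rw [memLp_two_iff_integrable_sq hhm]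
    exact hh.congr (ae_of_all μ fun x => (Real.sq_sqrt (hh0 x)).symm)
  have hmul : Integrable (fun x => Real.sqrt (f x) * Real.sqrt (h x)) μ := by
    rw [← memLp_one_iff_integrable]
    have := hh2.smul (p := 2) (q := 2) (r := 1) hf2
      (hpqr := ⟨by simp only [inv_one]; exact ENNReal.inv_two_add_inv_two⟩)
    simpa [smul_eq_mul, Pi.mul_def] using this
  refine ⟨hmul, ?_⟩
  have hpq : Real.HolderConjugate 2 2 := ⟨by norm_num, by norm_num, by norm_num⟩
  have h2 : ENNReal.ofReal (2:ℝ) = 2 := by norm_num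
  have := integral_mul_le_Lp_mul_Lq_of_nonneg hpq
    (f := fun x => Real.sqrt (f x)) (g := fun x => Real.sqrt (h x))
    (ae_of_all μ fun x => Real.sqrt_nonneg _)
    (ae_of_all μ fun x => Real.sqrt_nonneg _)
    (h2 ▸ hf2) (h2 ▸ hh2)
  calc ∫ x, Real.sqrt (f x) * Real.sqrt (h x) ∂μ
      ≤ (∫ x, Real.sqrt (f x) ^ (2:ℝ) ∂μ) ^ (1/2:ℝ) *
        (∫ x, Real.sqrt (h x) ^ (2:ℝ) ∂μ) ^ (1/2:ℝ) := this
    _ = Real.sqrt ((∫ x, f x ∂μ) * ∫ x, h x ∂μ) := by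
        have ef : ∫ x, Real.sqrt (f x) ^ (2:ℝ) ∂μ = ∫ x, f x ∂μ := by
          refine integral_congr_ae (ae_of_all μ fun x => ?_)
          simp only [show ((2:ℝ)) = ((2:ℕ):ℝ) by norm_num, Real.rpow_natCast]
          exact Real.sq_sqrt (hf0 x)
        have eh : ∫ x, Real.sqrt (h x) ^ (2:ℝ) ∂μ = ∫ x, h x ∂μ := by
          refine integral_congr_ae (ae_of_all μ fun x => ?_)
          simp only [show ((2:ℝ)) = ((2:ℕ):ℝ) by norm_num, Real.rpow_natCast]
          exact Real.sq_sqrt (hh0 x)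
        rw [ef, eh, Real.sqrt_eq_rpow]
        exact (Real.mul_rpow (integral_nonneg hf0) (integral_nonneg hh0)).symm

/-- Lemma 2: bias bound for the approximate partial risk built from σ̂. -/
theorem stmt_4 {α : Type*} [MeasurableSpace α] (μ : Measure α)
    (p σ σhat : α → ℝ) (η Cℓ : ℝ) (ℓ : ℝ → ℝ) (g : α → ℝ)
    (hη : η ∈ Set.Ioc (0 : ℝ) 1)
    (hp : ∀ x, 0 ≤ p x) (hprob : ∫ x, p x ∂μ = 1)
    (hσ : ∀ x, σ x ∈ Set.Icc (0 : ℝ) 1)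
    (hσhat : ∀ x, σhat x ∈ Set.Icc (0 : ℝ) 1)
    (hC : 0 < Cℓ) (hℓ : ∀ x, ℓ (-g x) ∈ Set.Icc (0 : ℝ) Cℓ)
    (hint : Integrable (fun x => ℓ (-g x) * (1 - σ x) * p x) μ)
    (hintU : Integrable
      (fun x => (if σhat x ≤ η then ℓ (-g x) * (1 - σhat x) else 0) * p x) μ)
    (hintS : Integrable
      (fun x => (if σhat x > η then ℓ (-g x) * ((1 - σhat x) / σhat x) else 0)
        * (σ x * p x)) μ)
    (hintp : Integrable p μ)
    (hintsq : Integrable (fun x => (σhat x - σ x) ^ 2 * p x) μ) :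
    |((∫ x, (if σhat x ≤ η then ℓ (-g x) * (1 - σhat x) else 0) * p x ∂μ)
        + ∫ x, (if σhat x > η then ℓ (-g x) * ((1 - σhat x) / σhat x) else 0)
            * (σ x * p x) ∂μ)
      - ∫ x, ℓ (-g x) * (1 - σ x) * p x ∂μ|
      ≤ Cℓ * Real.sqrt ((∫ x, (if σhat x ≤ η then p x else 0) ∂μ)
            * ∫ x, (σhat x - σ x) ^ 2 * p x ∂μ)
        + (Cℓ / η) * Real.sqrt ((1 - ∫ x, (if σhat x ≤ η then p x else 0) ∂μ)
            * ∫ x, (σhat x - σ x) ^ 2 * p x ∂μ) := by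
  obtain ⟨hη0, hη1⟩ := hη
  have hsq0 : ∀ x, 0 ≤ (σhat x - σ x) ^ 2 * p x :=
    fun x => mul_nonneg (sq_nonneg _) (hp x)
  -- the pointwise difference
  set D : α → ℝ := fun x =>
    ((if σhat x ≤ η then ℓ (-g x) * (1 - σhat x) else 0) * p x
      + (if σhat x > η then ℓ (-g x) * ((1 - σhat x) / σhat x) else 0) * (σ x * p x))
      - ℓ (-g x) * (1 - σ x) * p x with hDdef
  have hDint : Integrable D μ := (hintU.add hintS).sub hint
  have habs : |((∫ x, (if σhat x ≤ η then ℓ (-g x) * (1 - σhat x) else 0) * p x ∂μ)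
        + ∫ x, (if σhat x > η then ℓ (-g x) * ((1 - σhat x) / σhat x) else 0)
            * (σ x * p x) ∂μ)
      - ∫ x, ℓ (-g x) * (1 - σ x) * p x ∂μ| ≤ ∫ x, |D x| ∂μ := by
    have hsum : ((∫ x, (if σhat x ≤ η then ℓ (-g x) * (1 - σhat x) else 0) * p x ∂μ)
        + ∫ x, (if σhat x > η then ℓ (-g x) * ((1 - σhat x) / σhat x) else 0)
            * (σ x * p x) ∂μ)
      - ∫ x, ℓ (-g x) * (1 - σ x) * p x ∂μ = ∫ x, D x ∂μ := by
      have hadd : Integrable (fun x =>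
          (if σhat x ≤ η then ℓ (-g x) * (1 - σhat x) else 0) * p x
          + (if σhat x > η then ℓ (-g x) * ((1 - σhat x) / σhat x) else 0)
              * (σ x * p x)) μ := hintU.add hintS
      rw [hDdef]
      rw [integral_sub hadd hint, integral_add hintU hintS]
    rw [hsum]
    simpa [Real.norm_eq_abs] using norm_integral_le_integral_norm (μ := μ) D
  -- pointwise bound
  have hD : ∀ x, |D x| ≤ (if σhat x ≤ η then Cℓ else Cℓ / η)
      * (|σhat x - σ x| * p x) := by
    intro x
    rcases le_or_gt (σhat x) η with hx | hx
    · rw [hDdef]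
      simp only [if_pos hx, if_neg (not_lt.mpr hx)]
      have he : ℓ (-g x) * (1 - σhat x) * p x + 0 * (σ x * p x)
          - ℓ (-g x) * (1 - σ x) * p x
          = -(ℓ (-g x) * ((σhat x - σ x) * p x)) := by ring
      rw [he, abs_neg, abs_mul, abs_mul, abs_of_nonneg (hℓ x).1,
        abs_of_nonneg (hp x)]
      exact mul_le_mul_of_nonneg_right (hℓ x).2
        (mul_nonneg (abs_nonneg _) (hp x))
    · rw [hDdef]
      simp only [if_neg (not_le.mpr hx), if_pos hx]
      have hσp : 0 < σhat x := lt_trans hη0 hx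
      have he : 0 * p x + ℓ (-g x) * ((1 - σhat x) / σhat x) * (σ x * p x)
          - ℓ (-g x) * (1 - σ x) * p x
          = -((ℓ (-g x) / σhat x) * ((σhat x - σ x) * p x)) := by
        field_simp
        ring
      rw [he, abs_neg, abs_mul, abs_mul,
        abs_of_nonneg (div_nonneg (hℓ x).1 hσp.le), abs_of_nonneg (hp x)]
      exact mul_le_mul_of_nonneg_right
        (div_le_div₀ hC.le (hℓ x).2 hη0 hx.le)
        (mul_nonneg (abs_nonneg _) (hp x))
  have hG : ∀ x, Real.sqrt ((σhat x - σ x) ^ 2 * p x)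
      = |σhat x - σ x| * Real.sqrt (p x) := fun x => by
    rw [Real.sqrt_mul (sq_nonneg _), Real.sqrt_sq_eq_abs]
  have hpG : ∀ x, Real.sqrt (p x) * Real.sqrt ((σhat x - σ x) ^ 2 * p x)
      = |σhat x - σ x| * p x := fun x => by
    rw [hG x, mul_left_comm, Real.mul_self_sqrt (hp x)]
  by_cases hWm : AEStronglyMeasurable (fun x => if σhat x ≤ η then p x else 0) μ
  · -- measurable case: split over the two regions
    set W : α → ℝ := fun x => if σhat x ≤ η then p x else 0 with hWdef
    have hW0 : ∀ x, 0 ≤ W x := fun x => by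
      rw [hWdef]; dsimp only; split <;> simp [hp x]
    have hWle : ∀ x, W x ≤ p x := fun x => by
      rw [hWdef]; dsimp only; split <;> simp [hp x]
    have hintW : Integrable W μ := by
      refine Integrable.mono hintp hWm (ae_of_all μ fun x => ?_)
      rw [Real.norm_eq_abs, Real.norm_eq_abs, abs_of_nonneg (hW0 x),
        abs_of_nonneg (hp x)]
      exact hWle x
    have hintPW : Integrable (fun x => p x - W x) μ := hintp.sub hintW
    have hPW0 : ∀ x, 0 ≤ p x - W x := fun x => sub_nonneg.mpr (hWle x)
    obtain ⟨hi1, hcs1⟩ := cs_sqrt μ W (fun x => (σhat x - σ x) ^ 2 * p x)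
      hW0 hsq0 hintW hintsq
    obtain ⟨hi2, hcs2⟩ := cs_sqrt μ (fun x => p x - W x)
      (fun x => (σhat x - σ x) ^ 2 * p x) hPW0 hsq0 hintPW hintsq
    have hbd : ∀ x, |D x|
        ≤ Cℓ * (Real.sqrt (W x) * Real.sqrt ((σhat x - σ x) ^ 2 * p x))
          + (Cℓ / η) * (Real.sqrt (p x - W x)
              * Real.sqrt ((σhat x - σ x) ^ 2 * p x)) := by
      intro x
      rcases le_or_gt (σhat x) η with hx | hx
      · have h1 : W x = p x := by rw [hWdef]; exact if_pos hx
        have h2 : p x - W x = 0 := by rw [h1]; ring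
        rw [h2, h1, Real.sqrt_zero, zero_mul, mul_zero, add_zero, hpG x]
        calc |D x| ≤ (if σhat x ≤ η then Cℓ else Cℓ / η)
              * (|σhat x - σ x| * p x) := hD x
          _ = Cℓ * (|σhat x - σ x| * p x) := by rw [if_pos hx]
      · have h1 : W x = 0 := by rw [hWdef]; exact if_neg (not_le.mpr hx)
        have h2 : p x - W x = p x := by rw [h1]; ring
        rw [h2, h1, Real.sqrt_zero, zero_mul, mul_zero, zero_add, hpG x]
        calc |D x| ≤ (if σhat x ≤ η then Cℓ else Cℓ / η)
              * (|σhat x - σ x| * p x) := hD x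
          _ = (Cℓ / η) * (|σhat x - σ x| * p x) := by
              rw [if_neg (not_le.mpr hx)]
    calc |((∫ x, (if σhat x ≤ η then ℓ (-g x) * (1 - σhat x) else 0) * p x ∂μ)
        + ∫ x, (if σhat x > η then ℓ (-g x) * ((1 - σhat x) / σhat x) else 0)
            * (σ x * p x) ∂μ)
      - ∫ x, ℓ (-g x) * (1 - σ x) * p x ∂μ| ≤ ∫ x, |D x| ∂μ := habs
      _ ≤ ∫ x, (Cℓ * (Real.sqrt (W x) * Real.sqrt ((σhat x - σ x) ^ 2 * p x))
          + (Cℓ / η) * (Real.sqrt (p x - W x)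
            * Real.sqrt ((σhat x - σ x) ^ 2 * p x))) ∂μ := by
          refine integral_mono hDint.abs
            ((hi1.const_mul Cℓ).add (hi2.const_mul (Cℓ / η))) hbd
      _ = Cℓ * ∫ x, Real.sqrt (W x) * Real.sqrt ((σhat x - σ x) ^ 2 * p x) ∂μ
          + (Cℓ / η) * ∫ x, Real.sqrt (p x - W x)
              * Real.sqrt ((σhat x - σ x) ^ 2 * p x) ∂μ := by
          rw [integral_add (hi1.const_mul Cℓ) (hi2.const_mul (Cℓ / η)),
            integral_const_mul, integral_const_mul]
      _ ≤ Cℓ * Real.sqrt ((∫ x, W x ∂μ) * ∫ x, (σhat x - σ x) ^ 2 * p x ∂μ)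
          + (Cℓ / η) * Real.sqrt ((∫ x, (p x - W x) ∂μ)
              * ∫ x, (σhat x - σ x) ^ 2 * p x ∂μ) :=
          add_le_add (mul_le_mul_of_nonneg_left hcs1 hC.le)
            (mul_le_mul_of_nonneg_left hcs2 (div_nonneg hC.le hη0.le))
      _ = Cℓ * Real.sqrt ((∫ x, W x ∂μ) * ∫ x, (σhat x - σ x) ^ 2 * p x ∂μ)
          + (Cℓ / η) * Real.sqrt ((1 - ∫ x, W x ∂μ)
              * ∫ x, (σhat x - σ x) ^ 2 * p x ∂μ) := by
          rw [integral_sub hintp hintW, hprob]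
  · -- non-measurable case: the `ζ` integral is (junk) zero
    have hζ : ∫ x, (if σhat x ≤ η then p x else 0) ∂μ = 0 :=
      integral_non_aestronglyMeasurable hWm
    rw [hζ, zero_mul, Real.sqrt_zero, mul_zero, zero_add, sub_zero]
    obtain ⟨hi, hcs⟩ := cs_sqrt μ p (fun x => (σhat x - σ x) ^ 2 * p x)
      hp hsq0 hintp hintsq
    have hCle : Cℓ ≤ Cℓ / η := by
      rw [le_div_iff₀ hη0]
      exact mul_le_of_le_one_right hC.le hη1
    have hbd : ∀ x, |D x| ≤ (Cℓ / η)
        * (Real.sqrt (p x) * Real.sqrt ((σhat x - σ x) ^ 2 * p x)) := by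
      intro x
      rw [hpG x]
      refine (hD x).trans (mul_le_mul_of_nonneg_right ?_
        (mul_nonneg (abs_nonneg _) (hp x)))
      split
      · exact hCle
      · exact le_rfl
    calc |((∫ x, (if σhat x ≤ η then ℓ (-g x) * (1 - σhat x) else 0) * p x ∂μ)
        + ∫ x, (if σhat x > η then ℓ (-g x) * ((1 - σhat x) / σhat x) else 0)
            * (σ x * p x) ∂μ)
      - ∫ x, ℓ (-g x) * (1 - σ x) * p x ∂μ| ≤ ∫ x, |D x| ∂μ := habs
      _ ≤ ∫ x, (Cℓ / η) * (Real.sqrt (p x)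
            * Real.sqrt ((σhat x - σ x) ^ 2 * p x)) ∂μ :=
          integral_mono hDint.abs (hi.const_mul (Cℓ / η)) hbd
      _ = (Cℓ / η) * ∫ x, Real.sqrt (p x)
            * Real.sqrt ((σhat x - σ x) ^ 2 * p x) ∂μ := integral_const_mul _ _
      _ ≤ (Cℓ / η) * Real.sqrt ((∫ x, p x ∂μ)
            * ∫ x, (σhat x - σ x) ^ 2 * p x ∂μ) :=
          mul_le_mul_of_nonneg_left hcs (div_nonneg hC.le hη0.le)
      _ = (Cℓ / η) * Real.sqrt (1 * ∫ x, (σhat x - σ x) ^ 2 * p x ∂μ) := by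
          rw [hprob]
end

section
/- (PU risk estimator unbiasedness) Define R̂_PU(g) = π·(1/n_P)Σ_i ℓ(g(x_i^P)) - π·(1/n_P)Σ_i ℓ(-g(x_i^P)) + (1/n_U)Σ_j ℓ(-g(x_j^U)) with x_i^P i.i.d. ∼ p_P and x_j^U i.i.d. ∼ p. Then E[R̂_PU(g)] = R(g), the true classification risk. -/
open MeasureTheory

/-- Unbiasedness of the PU risk estimator:
E[π·(1/n_P)Σℓ(g(X_i^P)) - π·(1/n_P)Σℓ(-g(X_i^P)) + (1/n_U)Σℓ(-g(X_j^U))] = R(g). -/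
theorem stmt_12 {Ω α : Type*} [MeasurableSpace Ω] [MeasurableSpace α]
    (P : Measure Ω) [IsProbabilityMeasure P]
    (μ μP μN : Measure α) [IsProbabilityMeasure μP] [IsProbabilityMeasure μN]
    (π : ℝ) (hπ : π ∈ Set.Icc (0 : ℝ) 1)
    (hmix : μ = ENNReal.ofReal π • μP + ENNReal.ofReal (1 - π) • μN)
    (nP nU : ℕ) (hnP : 0 < nP) (hnU : 0 < nU)
    (XP : Fin nP → Ω → α) (XU : Fin nU → Ω → α)
    (hlawP : ∀ i, Measure.map (XP i) P = μP)
    (hlawU : ∀ j, Measure.map (XU j) P = μ)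
    (ℓ : ℝ → ℝ) (g : α → ℝ)
    (hint1 : Integrable (fun x => ℓ (g x)) μP)
    (hint2 : Integrable (fun x => ℓ (-g x)) μP)
    (hint3 : Integrable (fun x => ℓ (-g x)) μN)
    (hintΩ : Integrable (fun ω =>
      π * ((1 : ℝ) / nP) * ∑ i, ℓ (g (XP i ω))
        - π * ((1 : ℝ) / nP) * ∑ i, ℓ (-g (XP i ω))
        + ((1 : ℝ) / nU) * ∑ j, ℓ (-g (XU j ω))) P) :
    ∫ ω, (π * ((1 : ℝ) / nP) * ∑ i, ℓ (g (XP i ω))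
        - π * ((1 : ℝ) / nP) * ∑ i, ℓ (-g (XP i ω))
        + ((1 : ℝ) / nU) * ∑ j, ℓ (-g (XU j ω))) ∂P
      = π * (∫ x, ℓ (g x) ∂μP) + (1 - π) * ∫ x, ℓ (-g x) ∂μN := by
  have hπ0 : 0 ≤ π := hπ.1
  have hπ1 : 0 ≤ 1 - π := by linarith [hπ.2]
  -- AEMeasurability of the random variables
  have hAEP : ∀ i, AEMeasurable (XP i) P := by
    intro i
    by_contra h
    have := hlawP i
    rw [Measure.map_of_not_aemeasurable h] at this
    exact (IsProbabilityMeasure.ne_zero μP) this.symm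
  have hμ0 : μ ≠ 0 := by
    intro h0
    have : μ Set.univ = 1 := by
      rw [hmix]
      simp only [Measure.coe_add, Measure.coe_smul, Pi.add_apply, Pi.smul_apply,
        measure_univ, smul_eq_mul, mul_one]
      rw [← ENNReal.ofReal_add hπ0 hπ1]
      norm_num
    rw [h0] at this
    simp at this
  have hAEU : ∀ j, AEMeasurable (XU j) P := by
    intro j
    by_contra h
    have := hlawU j
    rw [Measure.map_of_not_aemeasurable h] at this
    exact hμ0 this.symm
  -- Integrability wrt μ
  have hIμ : Integrable (fun x => ℓ (-g x)) μ := by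
    rw [hmix]
    exact (hint2.smul_measure ENNReal.ofReal_ne_top).add_measure
      (hint3.smul_measure ENNReal.ofReal_ne_top)
  have hI1 : ∀ i, Integrable (fun ω => ℓ (g (XP i ω))) P := by
    intro i
    have h := hint1; rw [← hlawP i] at h
    exact (integrable_map_measure h.aestronglyMeasurable (hAEP i)).mp h
  have hI2 : ∀ i, Integrable (fun ω => ℓ (-g (XP i ω))) P := by
    intro i
    have h := hint2; rw [← hlawP i] at h
    exact (integrable_map_measure h.aestronglyMeasurable (hAEP i)).mp h
  have hI3 : ∀ j, Integrable (fun ω => ℓ (-g (XU j ω))) P := by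
    intro j
    have h := hIμ; rw [← hlawU j] at h
    exact (integrable_map_measure h.aestronglyMeasurable (hAEU j)).mp h
  -- Identify the marginal integrals
  have hE1 : ∀ i, ∫ ω, ℓ (g (XP i ω)) ∂P = ∫ x, ℓ (g x) ∂μP := by
    intro i
    rw [← hlawP i, integral_map (hAEP i) ((hlawP i).symm ▸ hint1.aestronglyMeasurable)]
  have hE2 : ∀ i, ∫ ω, ℓ (-g (XP i ω)) ∂P = ∫ x, ℓ (-g x) ∂μP := by
    intro i
    rw [← hlawP i, integral_map (hAEP i) ((hlawP i).symm ▸ hint2.aestronglyMeasurable)]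
  have hE3 : ∀ j, ∫ ω, ℓ (-g (XU j ω)) ∂P = ∫ x, ℓ (-g x) ∂μ := by
    intro j
    rw [← hlawU j, integral_map (hAEU j) ((hlawU j).symm ▸ hIμ.aestronglyMeasurable)]
  -- Decompose ∫ dμ
  have hEμ : ∫ x, ℓ (-g x) ∂μ
      = π * ∫ x, ℓ (-g x) ∂μP + (1 - π) * ∫ x, ℓ (-g x) ∂μN := by
    rw [hmix, integral_add_measure (hint2.smul_measure ENNReal.ofReal_ne_top)
      (hint3.smul_measure ENNReal.ofReal_ne_top), integral_smul_measure,
      integral_smul_measure, ENNReal.toReal_ofReal hπ0, ENNReal.toReal_ofReal hπ1]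
    simp [smul_eq_mul]
  -- Split the integral
  have hIS1 : Integrable (fun ω => ∑ i, ℓ (g (XP i ω))) P :=
    integrable_finset_sum _ fun i _ => hI1 i
  have hIS2 : Integrable (fun ω => ∑ i, ℓ (-g (XP i ω))) P :=
    integrable_finset_sum _ fun i _ => hI2 i
  have hIS3 : Integrable (fun ω => ∑ j, ℓ (-g (XU j ω))) P :=
    integrable_finset_sum _ fun j _ => hI3 j
  have hsub : Integrable (fun ω =>
      π * ((1 : ℝ) / nP) * ∑ i, ℓ (g (XP i ω))
        - π * ((1 : ℝ) / nP) * ∑ i, ℓ (-g (XP i ω))) P :=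
    (hIS1.const_mul _).sub (hIS2.const_mul _)
  rw [integral_add hsub (hIS3.const_mul _),
    integral_sub (hIS1.const_mul _) (hIS2.const_mul _),
    integral_const_mul, integral_const_mul, integral_const_mul,
    integral_finset_sum _ (fun i _ => hI1 i), integral_finset_sum _ (fun i _ => hI2 i),
    integral_finset_sum _ (fun j _ => hI3 j)]
  simp only [hE1, hE2, hE3, Finset.sum_const, Finset.card_univ, Fintype.card_fin, nsmul_eq_mul]
  rw [hEμ]
  have hnP' : (nP : ℝ) ≠ 0 := Nat.cast_ne_zero.mpr hnP.ne'
  have hnU' : (nU : ℝ) ≠ 0 := Nat.cast_ne_zero.mpr hnU.ne'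
  field_simp
  ring
end
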